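/- Fix a nonzero real number β. Let G = {(A_t, u(e₁+e₂) + βt e₃) | t, u ∈ ℝ} act on ℝ³ by (A, a)·x = Ax + a, where A_t = (cosh t)(E₁₁+E₂₂) + (sinh t)(E₁₂+E₂₁) + E₃₃. Then this action is proper: if sequences (t_n, u_n) in ℝ² and X_n in ℝ³ are such that X_n → X and (A_{t_n}, u_n(e₁+e₂) + βt_n e₃)·X_n → Y, then t_n converges to (Y₃ - X₃)/β and u_n converges to Y₁ - X₁ cosh((Y₃-X₃)/β) - X₂ sinh((Y₃-X₃)/β). -/

import Mathlib

open Filter Topology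

/-- A_t = (cosh t)(E₁₁+E₂₂) + (sinh t)(E₁₂+E₂₁) + E₃₃ -/
noncomputable def At (t : ℝ) : Matrix (Fin 3) (Fin 3) ℝ :=
  !![Real.cosh t, Real.sinh t, 0; Real.sinh t, Real.cosh t, 0; 0, 0, 1]

/-- The action of the group element with parameters (t,u) on x ∈ ℝ³. -/
noncomputable def act (β t u : ℝ) (x : Fin 3 → ℝ) : Fin 3 → ℝ :=
  (At t).mulVec x + u • ![1, 1, 0] + (β * t) • ![0, 0, 1]

/-!
Both group parameters can be read off continuously from a point `x` and its image `g · x`: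
the third coordinate gives `t = ((g · x)₃ - x₃) / β`, and then the first coordinate gives
`u = (g · x)₁ - x₁ cosh t - x₂ sinh t`. Passing to the limit in these two identities yields the
limits of `tₙ` and `uₙ`.
-/

section ActCoordinates

variable (β t u : ℝ) (x : Fin 3 → ℝ)

lemma act_apply_zero : act β t u x 0 = Real.cosh t * x 0 + Real.sinh t * x 1 + u := by
  simp [act, At, dotProduct, Fin.sum_univ_three]

lemma act_apply_two : act β t u x 2 = x 2 + β * t := by
  simp [act, At, dotProduct, Fin.sum_univ_three]

lemma eq_act_apply_two_sub_div (hβ : β ≠ 0) : t = (act β t u x 2 - x 2) / β := by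
  rw [act_apply_two]
  field_simp
  ring

lemma eq_act_apply_zero_sub : u = act β t u x 0 - x 0 * Real.cosh t - x 1 * Real.sinh t := by
  rw [act_apply_zero]
  ring

end ActCoordinates

/-- Properness of the action of G = {(A_t, u(e₁+e₂)+βt e₃)} for β ≠ 0:
if X_n → X and g_n·X_n → Y then the group parameters converge. -/
theorem proper_action_case_d (β : ℝ) (hβ : β ≠ 0)
    (t u : ℕ → ℝ) (Xn : ℕ → Fin 3 → ℝ) (X Y : Fin 3 → ℝ)
    (hX : Tendsto Xn atTop (𝓝 X))
    (hY : Tendsto (fun n => act β (t n) (u n) (Xn n)) atTop (𝓝 Y)) :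
    Tendsto t atTop (𝓝 ((Y 2 - X 2) / β)) ∧
    Tendsto u atTop (𝓝 (Y 0 - X 0 * Real.cosh ((Y 2 - X 2) / β)
      - X 1 * Real.sinh ((Y 2 - X 2) / β))) := by
  have hXi := tendsto_pi_nhds.1 hX
  have hYi := tendsto_pi_nhds.1 hY
  have ht : Tendsto t atTop (𝓝 ((Y 2 - X 2) / β)) :=
    (((hYi 2).sub (hXi 2)).div_const β).congr fun n => (eq_act_apply_two_sub_div β _ _ _ hβ).symm
  have hcosh := (Real.continuous_cosh.tendsto _).comp ht
  have hsinh := (Real.continuous_sinh.tendsto _).comp ht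
  exact ⟨ht, (((hYi 0).sub ((hXi 0).mul hcosh)).sub ((hXi 1).mul hsinh)).congr
    fun n => (eq_act_apply_zero_sub β (t n) (u n) (Xn n)).symm⟩
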